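/- arXiv:1010.4248 — 2 statements merged into one kernel-verified Lean document; each statement's English description precedes it below -/
import Mathlib

section
/- Let X be an ℝ^d-valued random vector whose law μ is singular with respect to λ^d and compactly supported. Then there exist finite sets C(N) ⊆ ℝ^d, N ∈ ℕ, such that lim_{N→∞} |C(N)|/N = 0 and lim_{N→∞} E[φ(N^{1/d} d(X,C(N)))] = 0. -/
open MeasureTheory Filter Set
open scoped ENNReal NNReal

noncomputable section

abbrev Rd (d : ℕ) := Fin d → ℝ

/-- `nrm` is a norm on `ℝ^d`. -/
def IsNorm {d : ℕ} (nrm : Rd d → ℝ) : Prop :=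
  (∀ x, 0 ≤ nrm x) ∧ (∀ x, nrm x = 0 ↔ x = 0) ∧
  (∀ (c : ℝ) (x : Rd d), nrm (c • x) = |c| * nrm x) ∧
  (∀ x y, nrm (x + y) ≤ nrm x + nrm y)

/-- The standing assumptions on `φ`: increasing, nonnegative, left continuous,
`lim_{t↓0} φ(t) = 0`, and not identically zero on `[0,∞)`. -/
def PhiOK (φ : ℝ → ℝ) : Prop :=
  MonotoneOn φ (Ici 0) ∧ (∀ t, 0 ≤ t → 0 ≤ φ t) ∧
  (∀ t, 0 < t → Tendsto φ (nhdsWithin t (Iio t)) (nhds (φ t))) ∧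
  Tendsto φ (nhdsWithin 0 (Ioi 0)) (nhds 0) ∧
  (∃ t, 0 ≤ t ∧ φ t ≠ 0)

/-- distance from a point to a set, `d(x,A) = inf_{y ∈ A} ‖x - y‖`. -/
def dSet {d : ℕ} (nrm : Rd d → ℝ) (x : Rd d) (A : Set (Rd d)) : ℝ :=
  sInf ((fun y => nrm (x - y)) '' A)

/-- the unit cube `[0,1)^d`. -/
def unitCube (d : ℕ) : Set (Rd d) := univ.pi fun _ => Ico (0:ℝ) 1

/-- `f_N(η) = inf_C E[φ((N/η)^{1/d} d(U,C))]`, infimum over nonempty codebooks of at most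
`⌊N⌋` points, `U` uniform on `[0,1)^d`; it is `∞` for `N < 1` (empty infimum). -/
def fNq {d : ℕ} (nrm : Rd d → ℝ) (φ : ℝ → ℝ) (N η : ℝ) : ℝ≥0∞ :=
  ⨅ (C : Finset (Rd d)) (_ : C.Nonempty) (_ : (C.card : ℝ) ≤ N),
    ∫⁻ x in unitCube d, ENNReal.ofReal (φ ((N / η) ^ (1 / (d:ℝ)) * dSet nrm x (C : Set (Rd d)))) ∂volume

/-- `g(η) = inf_{N ≥ 1} f_N(η)` for `η > 0`, extended by `g(0) = lim_{η↓0} g(η) = sup_{η>0} g(η)`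
for `η ≤ 0`. -/
def gq {d : ℕ} (nrm : Rd d → ℝ) (φ : ℝ → ℝ) (η : ℝ) : ℝ≥0∞ :=
  if 0 < η then ⨅ N ∈ Ici (1:ℝ), fNq nrm φ N η
  else ⨆ η' ∈ Ioi (0:ℝ), ⨅ N ∈ Ici (1:ℝ), fNq nrm φ N η'

/-- the absolutely continuous part `μ_c` of `μ` with respect to Lebesgue measure. -/
def muc {d : ℕ} (μ : Measure (Rd d)) : Measure (Rd d) :=
  volume.withDensity (μ.rnDeriv volume)

/-- Orlicz norm `‖F(X)‖_φ = inf{t > 0 : E[φ(F(X)/t)] ≤ 1}` (as the `sInf` in `ℝ≥0∞`,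
so it is `∞` when no such `t` exists), where `X` has law `μ`. -/
def orliczN {d : ℕ} (φ : ℝ → ℝ) (μ : Measure (Rd d)) (F : Rd d → ℝ) : ℝ≥0∞ :=
  sInf {s : ℝ≥0∞ | ∃ t : ℝ, 0 < t ∧ s = ENNReal.ofReal t ∧
    ∫⁻ x, ENNReal.ofReal (φ (F x / t)) ∂μ ≤ 1}

/-- the quantization error `δ(N|X,φ)`, where `X` has law `μ`. -/
def quantErr {d : ℕ} (nrm : Rd d → ℝ) (φ : ℝ → ℝ) (μ : Measure (Rd d)) (N : ℝ) : ℝ≥0∞ :=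
  ⨅ (C : Finset (Rd d)) (_ : C.Nonempty) (_ : (C.card : ℝ) ≤ N),
    orliczN φ μ (fun x => dSet nrm x (C : Set (Rd d)))

/-- `I`, the value of the point allocation problem. -/
def pav {d : ℕ} (nrm : Rd d → ℝ) (φ : ℝ → ℝ) (μ : Measure (Rd d)) : ℝ≥0∞ :=
  ⨅ (ξ : Rd d → ℝ) (_ : ∀ x, 0 ≤ ξ x) (_ : Integrable ξ volume)
    (_ : ∫⁻ x, gq nrm φ (ξ x) ∂(muc μ) ≤ 1),
    ENNReal.ofReal (∫ x, ξ x)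

/-- `ḡ(a) = inf_{η>0} [g(η) + aη]`. -/
def gbarq {d : ℕ} (nrm : Rd d → ℝ) (φ : ℝ → ℝ) (a : ℝ≥0∞) : ℝ≥0∞ :=
  ⨅ η ∈ Ioi (0:ℝ), (gq nrm φ η + a * ENNReal.ofReal η)



/-!
A measure singular to Lebesgue measure is carried by open sets of arbitrarily small volume, and by
inner regularity almost all of its mass sits on a compact `K' ⊆ U` with `vol U` small. A maximal
separated subset of `K'` at scale `ρ N^{-1/d}` has disjoint balls inside `U`, hence at most
`vol U · N / ρ^d` points: a small fraction `θ/2` of `N`. It brings the bulk of the mass to scaled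
distance `ρ`, where `φ` is small. A second net of the same kind over the compact support, with
`ρ` large, also uses at most `θN/2` points and bounds the scaled distance by a constant `T`, so
the mass off `K'` contributes at most `φ(T) μ(K'ᶜ)`. Letting `θ → 0` along a diagonal sequence
gives the codebooks.
-/

theorem IsNorm.exists_le_mul_norm {d : ℕ} {nrm : Rd d → ℝ} (h : IsNorm nrm) :
    ∃ M : ℝ, 0 < M ∧ ∀ v : Rd d, nrm v ≤ M * ‖v‖ := by
  obtain ⟨hnonneg, hzero, hsmul, hadd⟩ := h
  set e : Fin d → Rd d := fun i => Pi.single i 1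
  have he : 0 ≤ ∑ i, nrm (e i) := Finset.sum_nonneg fun i _ => hnonneg (e i)
  refine ⟨1 + ∑ i, nrm (e i), by positivity, fun v => ?_⟩
  have hv : ∑ i, v i • e i = v := by ext j; simp [e, Pi.single_apply]
  calc nrm v = nrm (∑ i, v i • e i) := by rw [hv]
    _ ≤ ∑ i, nrm (v i • e i) := Finset.le_sum_of_subadditive nrm ((hzero 0).2 rfl).le hadd _ _
    _ ≤ ∑ i, ‖v‖ * nrm (e i) := by
        refine Finset.sum_le_sum fun i _ => ?_
        rw [hsmul, ← Real.norm_eq_abs]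
        exact mul_le_mul_of_nonneg_right (norm_le_pi_norm v i) (hnonneg _)
    _ ≤ (1 + ∑ i, nrm (e i)) * ‖v‖ := by
        rw [← Finset.mul_sum]
        nlinarith [norm_nonneg v]

theorem dSet_nonneg {d : ℕ} {nrm : Rd d → ℝ} (h : IsNorm nrm) (x : Rd d) (A : Set (Rd d)) :
    0 ≤ dSet nrm x A :=
  Real.sInf_nonneg (by rintro _ ⟨y, -, rfl⟩; exact h.1 _)

theorem dSet_le_mul_dist {d : ℕ} {nrm : Rd d → ℝ} (h : IsNorm nrm) {M : ℝ}
    (hM : ∀ v, nrm v ≤ M * ‖v‖) (x : Rd d) {A : Set (Rd d)} {c : Rd d} (hc : c ∈ A) :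
    dSet nrm x A ≤ M * dist x c := by
  have hbdd : BddBelow ((fun y => nrm (x - y)) '' A) := ⟨0, by rintro _ ⟨y, -, rfl⟩; exact h.1 _⟩
  exact (csInf_le hbdd ⟨c, hc, rfl⟩).trans (by simpa only [dist_eq_norm] using hM (x - c))

theorem exists_finset_isCover_card_mul_le_volume {ι : Type*} [Fintype ι] {A : Set (ι → ℝ)}
    (hA : IsCompact A) {ε : ℝ} (hε : 0 < ε) :
    ∃ C : Finset (ι → ℝ), (∀ x ∈ A, ∃ c ∈ C, dist x c ≤ ε) ∧
      (C.card : ℝ≥0∞) * ENNReal.ofReal (ε ^ Fintype.card ι) ≤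
        volume (Metric.thickening (ε / 2) A) := by
  lift ε to ℝ≥0 using hε.le
  have hε2 : ε / 2 ≠ 0 := (div_pos (mod_cast hε) two_pos).ne'
  have hpack : Metric.packingNumber ε A ≠ ⊤ := by
    obtain ⟨N, -, hNfin, hN⟩ := Metric.exists_finite_isCover_of_isCompact hε2 hA
    refine ne_top_of_le_ne_top (Set.encard_ne_top_iff.2 hNfin) ?_
    calc Metric.packingNumber ε A = Metric.packingNumber (2 * (ε / 2)) A := by
          rw [mul_div_cancel₀ _ two_ne_zero]
      _ ≤ Metric.externalCoveringNumber (ε / 2) A :=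
          Metric.packingNumber_two_mul_le_externalCoveringNumber _ _
      _ ≤ N.encard := hN.externalCoveringNumber_le_encard
  set S := Metric.maximalSeparatedSet ε A
  have hS : S.Finite := Set.encard_ne_top_iff.1 (Metric.encard_maximalSeparatedSet hpack ▸ hpack)
  refine ⟨hS.toFinset, fun x hx => ?_, ?_⟩
  · obtain ⟨c, hc, hxc⟩ := Metric.isCover_maximalSeparatedSet hpack hx
    exact ⟨c, hS.mem_toFinset.2 hc, by simpa [edist_dist] using hxc⟩
  · have hdisj : (hS.toFinset : Set (ι → ℝ)).PairwiseDisjoint (Metric.ball · (ε / 2 : ℝ)) := by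
      intro c hc c' hc' hne
      have hsep : (ε : ℝ≥0∞) < edist c c' :=
        Metric.isSeparated_maximalSeparatedSet (hS.mem_toFinset.1 hc) (hS.mem_toFinset.1 hc') hne
      rw [edist_dist, ENNReal.coe_nnreal_eq] at hsep
      have hdist := (ENNReal.ofReal_lt_ofReal_iff_of_nonneg ε.coe_nonneg).1 hsep
      exact Metric.ball_disjoint_ball (by linarith)
    calc (hS.toFinset.card : ℝ≥0∞) * ENNReal.ofReal ((ε : ℝ) ^ Fintype.card ι)
        = ∑ c ∈ hS.toFinset, volume (Metric.ball c (ε / 2 : ℝ)) := by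
          simp [Real.volume_pi_ball _ (half_pos hε), mul_div_cancel₀ _ (two_ne_zero' ℝ)]
      _ = volume (⋃ c ∈ hS.toFinset, Metric.ball c (ε / 2 : ℝ)) :=
          (measure_biUnion_finset hdisj fun _ _ => measurableSet_ball).symm
      _ ≤ volume (Metric.thickening (ε / 2 : ℝ) A) := measure_mono <| iUnion₂_subset fun c hc =>
          Metric.ball_subset_thickening
            (Metric.maximalSeparatedSet_subset (hS.mem_toFinset.1 hc)) _

theorem eventually_exists_finset_card_le {d : ℕ} (hd : 0 < d) {A U : Set (Rd d)}
    (hA : IsCompact A) (hU : IsOpen U) (hAU : A ⊆ U) (hUfin : volume U ≠ ⊤) {ρ κ : ℝ}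
    (hρ : 0 < ρ) (hUκ : (volume U).toReal ≤ κ * ρ ^ d) :
    ∀ᶠ N : ℕ in atTop, ∃ C : Finset (Rd d),
      (∀ x ∈ A, ∃ c ∈ C, (N : ℝ) ^ (1 / (d : ℝ)) * dist x c ≤ ρ) ∧ (C.card : ℝ) ≤ κ * N := by
  obtain ⟨δ, hδ, hδU⟩ := hA.exists_thickening_subset_open hU hAU
  have hscale : Tendsto (fun N : ℕ => (N : ℝ) ^ (1 / (d : ℝ))) atTop atTop :=
    (tendsto_rpow_atTop (by positivity)).comp tendsto_natCast_atTop_atTop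
  filter_upwards [hscale.eventually_ge_atTop (ρ / (2 * δ)), eventually_gt_atTop 0] with N hNρ hN
  set s := (N : ℝ) ^ (1 / (d : ℝ)) with hs_def
  have hs : 0 < s := Real.rpow_pos_of_pos (Nat.cast_pos.2 hN) _
  have hsd : s ^ d = N := by
    rw [hs_def, one_div, Real.rpow_inv_natCast_pow (Nat.cast_nonneg N) hd.ne']
  obtain ⟨C, hcov, hvol⟩ := exists_finset_isCover_card_mul_le_volume hA (div_pos hρ hs)
  refine ⟨C, fun x hx => ?_, ?_⟩
  · obtain ⟨c, hc, hxc⟩ := hcov x hx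
    exact ⟨c, hc, (le_div_iff₀' hs).1 hxc⟩
  · have hthick : Metric.thickening (ρ / s / 2) A ⊆ U := by
      refine (Metric.thickening_mono ?_ A).trans hδU
      rw [div_div, div_le_iff₀ (by positivity)]
      rw [div_le_iff₀ (by positivity)] at hNρ
      linarith
    have hreal := (ENNReal.toReal_mono hUfin (hvol.trans (measure_mono hthick))).trans hUκ
    rw [Fintype.card_fin, ENNReal.toReal_mul, ENNReal.toReal_natCast,
      ENNReal.toReal_ofReal (by positivity), div_pow, hsd, mul_div_assoc',
      div_le_iff₀ (Nat.cast_pos.2 hN), mul_right_comm] at hreal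
    exact le_of_mul_le_mul_right hreal (pow_pos hρ d)

theorem MeasureTheory.Measure.MutuallySingular.exists_isCompact_subset_isOpen {X : Type*}
    [TopologicalSpace X] [T2Space X] [MeasurableSpace X] [OpensMeasurableSpace X]
    {μ ν : Measure X} [IsFiniteMeasure μ] [μ.InnerRegularCompactLTTop] [ν.OuterRegular]
    (h : μ ⟂ₘ ν) {ε η : ℝ≥0∞} (hε : ε ≠ 0) (hη : η ≠ 0) :
    ∃ K U : Set X, IsCompact K ∧ IsOpen U ∧ K ⊆ U ∧ ν U < ε ∧ μ Kᶜ < η := by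
  obtain ⟨S, -, hμS, hνS⟩ := h
  obtain ⟨U, hSU, hU, hνU⟩ := Sᶜ.exists_isOpen_lt_of_lt ε (by rw [hνS]; exact pos_iff_ne_zero.2 hε)
  obtain ⟨K, hKU, hK, hμK⟩ := hU.measurableSet.exists_isCompact_lt_add (measure_ne_top μ U) hη
  refine ⟨K, U, hK, hU, hKU, hνU, ?_⟩
  have hμU : μ Uᶜ = 0 := measure_mono_null (compl_subset_comm.1 hSU) hμS
  calc μ Kᶜ ≤ μ (U \ K) + μ Uᶜ := by
        refine (measure_mono fun x hx => ?_).trans (measure_union_le _ _)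
        by_cases hxU : x ∈ U
        exacts [Or.inl ⟨hxU, hx⟩, Or.inr hxU]
    _ < η := by
        rw [hμU, add_zero]
        exact measure_sdiff_lt_of_lt_add hK.measurableSet.nullMeasurableSet hKU
          (measure_ne_top μ K) hμK

theorem MeasureTheory.lintegral_le_add_mul_measure_compl {X : Type*} [MeasurableSpace X]
    {μ : Measure X} [IsProbabilityMeasure μ] {f : X → ℝ≥0∞} {s : Set X} (hs : MeasurableSet s)
    {a b : ℝ≥0∞} (ha : ∀ x ∈ s, f x ≤ a) (hb : ∀ᵐ x ∂μ, f x ≤ b) :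
    ∫⁻ x, f x ∂μ ≤ a + b * μ sᶜ :=
  calc ∫⁻ x, f x ∂μ = ∫⁻ x in s, f x ∂μ + ∫⁻ x in sᶜ, f x ∂μ := (lintegral_add_compl f hs).symm
    _ ≤ ∫⁻ _ in s, a ∂μ + ∫⁻ _ in sᶜ, b ∂μ :=
        add_le_add (setLIntegral_mono' hs ha) (lintegral_mono_ae (ae_restrict_of_ae hb))
    _ ≤ a + b * μ sᶜ := by
        rw [setLIntegral_const, setLIntegral_const]
        gcongr
        exact mul_le_of_le_one_right' prob_le_one

theorem ofReal_comp_mul_dSet_le {d : ℕ} {nrm : Rd d → ℝ} (hnrm : IsNorm nrm) {M : ℝ}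
    (hM0 : 0 ≤ M) (hM : ∀ v, nrm v ≤ M * ‖v‖) {φ : ℝ → ℝ} (hφ : MonotoneOn φ (Ici 0))
    {s ρ : ℝ} (hs : 0 ≤ s) {A : Set (Rd d)} {x c : Rd d} (hc : c ∈ A) (hxc : s * dist x c ≤ ρ) :
    ENNReal.ofReal (φ (s * dSet nrm x A)) ≤ ENNReal.ofReal (φ (M * ρ)) := by
  have h0 : 0 ≤ s * dSet nrm x A := mul_nonneg hs (dSet_nonneg hnrm x A)
  have hle : s * dSet nrm x A ≤ M * ρ :=
    calc s * dSet nrm x A ≤ s * (M * dist x c) :=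
          mul_le_mul_of_nonneg_left (dSet_le_mul_dist hnrm hM x hc) hs
      _ = M * (s * dist x c) := by ring
      _ ≤ M * ρ := mul_le_mul_of_nonneg_left hxc hM0
  exact ENNReal.ofReal_le_ofReal (hφ h0 (h0.trans hle) hle)

theorem eventually_exists_codebook {d : ℕ} (hd : 0 < d) {nrm : Rd d → ℝ} (hnrm : IsNorm nrm)
    {φ : ℝ → ℝ} (hφ : PhiOK φ) {μ : Measure (Rd d)} [IsProbabilityMeasure μ]
    (hsing : μ ⟂ₘ (volume : Measure (Rd d))) {K : Set (Rd d)} (hK : IsCompact K)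
    (hμK : μ Kᶜ = 0) {θ : ℝ} (hθ : 0 < θ) :
    ∀ᶠ N : ℕ in atTop, ∃ C : Finset (Rd d), C.Nonempty ∧ (C.card : ℝ) ≤ θ * N ∧
      ∫⁻ x, ENNReal.ofReal (φ ((N : ℝ) ^ (1 / (d : ℝ)) * dSet nrm x (C : Set (Rd d)))) ∂μ ≤
        ENNReal.ofReal θ := by
  obtain ⟨M, hM0, hM⟩ := hnrm.exists_le_mul_norm
  have hKne : K.Nonempty := Set.nonempty_iff_ne_empty.2 fun h => by simp [h] at hμK
  set V := (volume (Metric.thickening 1 K)).toReal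
  obtain ⟨ρ, hρV, hρ⟩ : ∃ ρ : ℝ, V / (θ / 2) ≤ ρ ^ d ∧ 0 < ρ :=
    (((tendsto_pow_atTop hd.ne').eventually_ge_atTop _).and (eventually_gt_atTop 0)).exists
  set T := M * ρ
  obtain ⟨τ, hφτ, hτ⟩ : ∃ τ, φ τ < θ / 2 ∧ 0 < τ :=
    ((hφ.2.2.2.1.eventually (Iio_mem_nhds (half_pos hθ))).and self_mem_nhdsWithin).exists
  have hτM : 0 < τ / M := div_pos hτ hM0
  -- `φ T * η ≤ θ / 2`, also when `φ T = 0` (then `η = ∞`)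
  obtain ⟨K', U, hK', hU, hK'U, hUvol, hμK'⟩ := hsing.exists_isCompact_subset_isOpen
    (ε := ENNReal.ofReal (θ / 2 * (τ / M) ^ d))
    (η := ENNReal.ofReal (θ / 2) / ENNReal.ofReal (φ T)) (by positivity) (by simp [hθ])
  filter_upwards [eventually_exists_finset_card_le hd hK' hU hK'U hUvol.ne_top hτM
      (ENNReal.toReal_le_of_le_ofReal (by positivity) hUvol.le),
    eventually_exists_finset_card_le hd hK Metric.isOpen_thickening
      (Metric.self_subset_thickening one_pos K) hK.isBounded.thickening.measure_lt_top.ne hρ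
      ((div_le_iff₀' (half_pos hθ)).1 hρV)]
    with N ⟨C₁, hC₁, hcard₁⟩ ⟨C₂, hC₂, hcard₂⟩
  set s := (N : ℝ) ^ (1 / (d : ℝ))
  have hs : 0 ≤ s := Real.rpow_nonneg (Nat.cast_nonneg N) _
  refine ⟨C₁ ∪ C₂, ?_, ?_, ?_⟩
  · obtain ⟨c, hc, -⟩ := hC₂ _ hKne.some_mem
    exact ⟨c, Finset.mem_union_right _ hc⟩
  · calc ((C₁ ∪ C₂).card : ℝ) ≤ C₁.card + C₂.card := mod_cast Finset.card_union_le C₁ C₂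
      _ ≤ θ * N := by linarith
  · have hfine : ∀ x ∈ K', ENNReal.ofReal (φ (s * dSet nrm x ↑(C₁ ∪ C₂))) ≤
        ENNReal.ofReal (φ τ) := fun x hx => by
      obtain ⟨c, hc, hxc⟩ := hC₁ x hx
      simpa only [mul_div_cancel₀ τ hM0.ne'] using ofReal_comp_mul_dSet_le hnrm hM0.le hM hφ.1 hs
        (Finset.mem_coe.2 (Finset.mem_union_left _ hc)) hxc
    have hcoarse : ∀ᵐ x ∂μ, ENNReal.ofReal (φ (s * dSet nrm x ↑(C₁ ∪ C₂))) ≤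
        ENNReal.ofReal (φ T) := by
      filter_upwards [mem_ae_iff.2 hμK] with x hx
      obtain ⟨c, hc, hxc⟩ := hC₂ x hx
      exact ofReal_comp_mul_dSet_le hnrm hM0.le hM hφ.1 hs
        (Finset.mem_coe.2 (Finset.mem_union_right _ hc)) hxc
    calc _ ≤ ENNReal.ofReal (φ τ) + ENNReal.ofReal (φ T) * μ K'ᶜ :=
          lintegral_le_add_mul_measure_compl hK'.measurableSet hfine hcoarse
      _ ≤ ENNReal.ofReal (θ / 2) + ENNReal.ofReal (θ / 2) :=
          add_le_add (ENNReal.ofReal_le_ofReal hφτ.le)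
            ((by gcongr : _ ≤ ENNReal.ofReal (φ T) * _).trans ENNReal.mul_div_le)
      _ = ENNReal.ofReal θ := by
          rw [← ENNReal.ofReal_add (by positivity) (by positivity), add_halves]

theorem Filter.exists_tendsto_atTop_eventually_diag {P : ℕ → ℕ → Prop}
    (h : ∀ m, ∀ᶠ N in atTop, P m N) :
    ∃ s : ℕ → ℕ, Tendsto s atTop atTop ∧ ∀ᶠ N in atTop, P (s N) N := by
  classical
  set Q : ℕ → ℕ → Prop := fun m N => ∀ k ≤ m, P k N
  have hQ : ∀ m, ∀ᶠ N in atTop, Q m N := fun m => (Set.finite_Iic m).eventually_all.2 fun k _ => h k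
  refine ⟨fun N => Nat.findGreatest (Q · N) N, tendsto_atTop_atTop.2 fun m => ?_, ?_⟩
  · obtain ⟨N₀, hN₀⟩ := ((hQ m).and (eventually_ge_atTop m)).exists_forall_of_atTop
    exact ⟨N₀, fun N hN => Nat.le_findGreatest (hN₀ N hN).2 (hN₀ N hN).1⟩
  · filter_upwards [hQ 0] with N hN
    exact Nat.findGreatest_spec (P := (Q · N)) (Nat.zero_le N) hN _ le_rfl

/-- The singular compactly supported case: there are codebooks with `|C(N)|/N → 0` and
`E[φ(N^{1/d} d(X,C(N)))] → 0`. -/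
theorem statement17 {d : ℕ} (hd : 0 < d)
    (nrm : Rd d → ℝ) (hnrm : IsNorm nrm) (φ : ℝ → ℝ) (hφ : PhiOK φ)
    (μ : Measure (Rd d)) [IsProbabilityMeasure μ]
    (hsing : μ ⟂ₘ (volume : Measure (Rd d)))
    (hcomp : ∃ K : Set (Rd d), IsCompact K ∧ μ Kᶜ = 0) :
    ∃ C : ℕ → Finset (Rd d), (∀ N, (C N).Nonempty) ∧
      Tendsto (fun N : ℕ => ((C N).card : ℝ) / N) atTop (nhds 0) ∧
      Tendsto (fun N : ℕ =>
          ∫⁻ x, ENNReal.ofReal (φ ((N:ℝ) ^ (1/(d:ℝ)) * dSet nrm x ((C N : Set (Rd d))))) ∂μ)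
        atTop (nhds 0) := by
  obtain ⟨K, hK, hμK⟩ := hcomp
  set ε : ℕ → ℝ := fun m => 1 / ((m : ℝ) + 1)
  obtain ⟨s, hs, hsN⟩ := Filter.exists_tendsto_atTop_eventually_diag fun m =>
    eventually_exists_codebook hd hnrm hφ hsing hK hμK (θ := ε m) (by positivity)
  have hε : Tendsto (fun N => ε (s N)) atTop (nhds 0) :=
    tendsto_one_div_add_atTop_nhds_zero_nat.comp hs
  obtain ⟨N₀, hN₀⟩ := hsN.exists_forall_of_atTop
  have hcodebook : ∀ N, ∃ C : Finset (Rd d), C.Nonempty ∧ (N₀ ≤ N → (C.card : ℝ) ≤ ε (s N) * N ∧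
      ∫⁻ x, ENNReal.ofReal (φ ((N : ℝ) ^ (1 / (d : ℝ)) * dSet nrm x (C : Set (Rd d)))) ∂μ ≤
        ENNReal.ofReal (ε (s N))) := fun N => by
    by_cases hN : N₀ ≤ N
    · obtain ⟨C, hCne, hC⟩ := hN₀ N hN
      exact ⟨C, hCne, fun _ => hC⟩
    · exact ⟨{0}, Finset.singleton_nonempty 0, fun h => absurd h hN⟩
  choose C hCne hC using hcodebook
  refine ⟨C, hCne, squeeze_zero' (.of_forall fun N => by positivity) ?_ hε,
    tendsto_of_tendsto_of_tendsto_of_le_of_le' tendsto_const_nhds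
      (ENNReal.ofReal_zero ▸ ENNReal.tendsto_ofReal hε) (.of_forall fun N => zero_le)
      ((eventually_ge_atTop N₀).mono fun N hN => (hC N hN).2)⟩
  filter_upwards [eventually_ge_atTop N₀] with N hN
  exact div_le_of_le_mul₀ (Nat.cast_nonneg N) (by positivity) (hC N hN).1

end
end

section
/- Let p > 0 and c > 0 be such that φ(t) ≤ c(1 + t^p) for all t ≥ 0, and let β > (p+d)/d. Then Ψ(t) = t^p (log₊ t)^β (where log₊ t = max(log t, 0)) satisfies the growth condition (G) for φ. -/
open MeasureTheory Filter Set
open scoped ENNReal NNReal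

noncomputable section

/-- Growth condition (G) for `φ`: there exist a positive decreasing summable sequence `(α_n)`
and a positive increasing sequence `(r_n)` with `∑ φ(α_n^{-1/d} r_{n+1}) / Ψ(r_n) < ∞`. -/
def GrowthG (d : ℕ) (φ Ψ : ℝ → ℝ) : Prop :=
  ∃ α r : ℕ → ℝ, (∀ n, 0 < α n) ∧ Antitone α ∧ Summable α ∧
    (∀ n, 0 < r n) ∧ Monotone r ∧
    (∑' n, ENNReal.ofReal (φ ((α n) ^ (-1 / (d:ℝ)) * r (n+1))) / ENNReal.ofReal (Ψ (r n))) ≠ ⊤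

/-! Take `α n = (n+1)^(-s)` with `1 < s < d(β-1)/p` and `r n = exp (n+1)`. For arguments `t ≥ 1`
the bound gives `φ t ≤ 2c t^p`, so the `n`-th term is at most
`2c (n+1)^(sp/d) e^((n+2)p) / (e^((n+1)p) (n+1)^β) = 2c e^p (n+1)^(sp/d - β)`,
and the choice of `s` makes the exponent `sp/d - β` smaller than `-1`. -/

lemma summable_nat_add_one_rpow {q : ℝ} (hq : q < -1) :
    Summable fun n : ℕ => ((n : ℝ) + 1) ^ q := by
  simpa using (summable_nat_add_iff 1).2 (Real.summable_nat_rpow.2 hq)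

lemma growthG_of_le_summable {d : ℕ} {φ Ψ : ℝ → ℝ} {α r b : ℕ → ℝ}
    (hα : ∀ n, 0 < α n) (hα_anti : Antitone α) (hα_sum : Summable α)
    (hr : ∀ n, 0 < r n) (hr_mono : Monotone r) (hΨ : ∀ n, 0 < Ψ (r n))
    (hb : Summable b) (hle : ∀ n, φ (α n ^ (-1 / (d : ℝ)) * r (n + 1)) / Ψ (r n) ≤ b n) :
    GrowthG d φ Ψ := by
  refine ⟨α, r, hα, hα_anti, hα_sum, hr, hr_mono,
    ne_top_of_le_ne_top hb.tsum_ofReal_ne_top (ENNReal.tsum_le_tsum fun n => ?_)⟩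
  rw [← ENNReal.ofReal_div_of_pos (hΨ n)]
  exact ENNReal.ofReal_le_ofReal (hle n)

def logPowerGrowth (p β t : ℝ) : ℝ := t ^ p * max (Real.log t) 0 ^ β

lemma logPowerGrowth_exp {p β x : ℝ} (hx : 0 ≤ x) :
    logPowerGrowth p β (Real.exp x) = Real.exp (x * p) * x ^ β := by
  rw [logPowerGrowth, Real.log_exp, max_eq_left hx, Real.exp_mul]

lemma div_logPowerGrowth_exp_le {φ : ℝ → ℝ} {p c β a A : ℝ} (hp : 0 ≤ p) (hc : 0 ≤ c)
    (hbound : ∀ t : ℝ, 0 ≤ t → φ t ≤ c * (1 + t ^ p)) (ha : 0 ≤ a) (hA : 1 ≤ A) :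
    φ (A ^ a * Real.exp (A + 1)) / logPowerGrowth p β (Real.exp A)
      ≤ 2 * c * Real.exp p * A ^ (a * p - β) := by
  set t := A ^ a * Real.exp (A + 1)
  have ht : 1 ≤ t := one_le_mul_of_one_le_of_one_le (Real.one_le_rpow hA ha)
    (Real.one_le_exp (by linarith))
  have hφt : φ t ≤ 2 * c * t ^ p := by
    have := hbound t (by linarith)
    nlinarith [Real.one_le_rpow ht hp]
  have htp : t ^ p = A ^ (a * p) * Real.exp (A * p) * Real.exp p := by
    rw [Real.mul_rpow (by positivity) (by positivity), ← Real.rpow_mul (by linarith),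
      ← Real.exp_mul, mul_assoc, ← Real.exp_add, add_mul, one_mul]
  have hA0 : 0 < A := by linarith
  rw [logPowerGrowth_exp hA0.le]
  calc φ t / (Real.exp (A * p) * A ^ β)
      ≤ 2 * c * t ^ p / (Real.exp (A * p) * A ^ β) := by gcongr
    _ = 2 * c * Real.exp p * A ^ (a * p - β) := by
      rw [htp, Real.rpow_sub hA0]
      field_simp

theorem statement19_general {d : ℕ} (hd : 0 < d) (φ : ℝ → ℝ) (p c : ℝ) (hp : 0 < p) (hc : 0 < c)
    (hbound : ∀ t : ℝ, 0 ≤ t → φ t ≤ c * (1 + t ^ p))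
    (β : ℝ) (hβ : (p + d) / d < β) :
    GrowthG d φ (fun t => t ^ p * (max (Real.log t) 0) ^ β) := by
  have hd' : (0 : ℝ) < d := by exact_mod_cast hd
  obtain ⟨s, hs1, hsβ⟩ : ∃ s, 1 < s ∧ s < d * (β - 1) / p := by
    refine exists_between ?_
    rw [add_div, div_self hd'.ne'] at hβ
    have : p / d < β - 1 := by linarith
    rw [div_lt_iff₀ hd'] at this
    rw [lt_div_iff₀ hp]
    linarith
  have hq : s / d * p - β < -1 := by
    have : s * p < d * (β - 1) := (lt_div_iff₀ hp).1 hsβ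
    have : s / d * p < β - 1 := by rw [div_mul_eq_mul_div, div_lt_iff₀ hd']; linarith
    linarith
  change GrowthG d φ (logPowerGrowth p β)
  refine growthG_of_le_summable (α := fun n => ((n : ℝ) + 1) ^ (-s))
    (r := fun n => Real.exp ((n : ℝ) + 1))
    (b := fun n => 2 * c * Real.exp p * ((n : ℝ) + 1) ^ (s / d * p - β))
    (fun n => by positivity)
    (fun m n hmn => Real.rpow_le_rpow_of_nonpos (by positivity) (by gcongr) (by linarith))
    (summable_nat_add_one_rpow (by linarith)) (fun n => Real.exp_pos _)
    (fun m n hmn => by dsimp only; gcongr) (fun n => ?_)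
    ((summable_nat_add_one_rpow hq).mul_left _) (fun n => ?_)
  · rw [logPowerGrowth_exp (by positivity)]; positivity
  · rw [← Real.rpow_mul (by positivity), show -s * (-1 / (d : ℝ)) = s / d by ring]
    push_cast
    exact div_logPowerGrowth_exp_le hp.le hc.le hbound (by positivity) (by linarith)

/-- If `φ(t) ≤ c(1 + t^p)` and `β > (p+d)/d` then `Ψ(t) = t^p (log₊ t)^β` satisfies (G). -/
theorem statement19 {d : ℕ} (hd : 0 < d) (φ : ℝ → ℝ) (hφ : PhiOK φ)
    (p c : ℝ) (hp : 0 < p) (hc : 0 < c)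
    (hbound : ∀ t : ℝ, 0 ≤ t → φ t ≤ c * (1 + t ^ p))
    (β : ℝ) (hβ : (p + d) / d < β) :
    GrowthG d φ (fun t => t ^ p * (max (Real.log t) 0) ^ β) :=
  statement19_general hd φ p c hp hc hbound β hβ

end
end
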